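/- arXiv:1601.07887 — 4 statements merged into one kernel-verified Lean document; each statement's English description precedes it below -/
import Mathlib

section
/- Let n ≥ 1 be an integer and let f : [α,β] → ℝ be n+2 times continuously differentiable. Suppose there are positive parameters M, T with M ≥ β−α and positive constants C_r such that |f^{(r)}(x)| ≤ C_r T/M^r on [α,β] for r = 2,…,n+2, and suppose f'(x) and f''(x) do not change signs on [α,β] and f' never vanishes there. Then ∫_α^β e(f(x)) dx = [e(f(x)) Σ_{i=1}^{n} H_i(x)]_α^β + O( Σ_{j=1}^{n} T^j / (min_{[α,β]}|f'|^{n+j+1} · M^{n+j}) ), where H_1(x) = 1/(2πi f'(x)), H_i(x) = −H'_{i−1}(x)/(2πi f'(x)), and the implied constant depends only on n and the constants C_r. -/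
/-!
Write `z = 2πi` and let `H₁ = 1/(z f')`, `H_{i+1} = -H_i'/(z f')`. Then
`(e(f) ∑_{i ≤ N} H_i)' = e(f) (1 + H_N')`, so one application of the fundamental theorem of
calculus with `N = n + 1` leaves the error `[e(f) H_{n+1}]_α^β - ∫ e(f) H_{n+1}'`.

Each `z^i H_i` is a sum of terms `c ∏_k f^{(a_k)} / (f')^p` with all `a_k ≥ 2`, `p = i + k` and
`∑_k (a_k - 1) = i - 1`; differentiating raises the weight `∑_k (a_k - 1)` by one and keeps
`p - k`. With `|f^{(a)}| ≤ C_a T/M^a` and `|f'| ≥ m`, each term of `z^{n+1} H_{n+1}` is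
`O(T^k/(m^{n+k+1} M^{n+k}))` with `1 ≤ k ≤ n`. A term of `z^{n+1} H_{n+1}'` containing `f''`
is integrated exactly, as `f''/f'^{q+2}` has constant sign and is the derivative of
`-1/((q+1) f'^{q+1})`; a term without `f''` has at most `n` factors and is bounded by its
supremum times `β - α ≤ M`.
-/

/-- `e(t) = exp(2πit)`. -/
noncomputable def e (t : ℝ) : ℂ := Complex.exp (2 * Real.pi * Complex.I * t)

open Set MeasureTheory Complex
open scoped Real Interval

namespace FirstDerivTest

/-! ### Symbolic derivatives of `H_i` -/

/-- Raise one entry of `l` by one, in all possible ways (Leibniz rule for `∏_{a ∈ l} f^{(a)}`). -/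
def bumps : List ℕ → List (List ℕ)
  | [] => []
  | a :: l => ((a + 1) :: l) :: (bumps l).map (a :: ·)

theorem of_mem_bumps {l l' : List ℕ} (h : l' ∈ bumps l) :
    l'.length = l.length ∧ l'.sum = l.sum + 1 ∧ ∀ b ∈ l', ∃ a ∈ l, a ≤ b := by
  induction l generalizing l' with
  | nil => simp [bumps] at h
  | cons a l ih =>
    simp only [bumps, List.mem_cons, List.mem_map] at h
    rcases h with rfl | ⟨l'', hl'', rfl⟩
    · refine ⟨rfl, by simp only [List.sum_cons]; omega, ?_⟩
      simp only [List.mem_cons, forall_eq_or_imp, exists_eq_or_imp]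
      exact ⟨Or.inl (Nat.le_succ a), fun b hb => Or.inr ⟨b, hb, le_rfl⟩⟩
    · obtain ⟨hlen, hsum, hle⟩ := ih hl''
      refine ⟨by simp [hlen], by simp only [List.sum_cons]; omega, ?_⟩
      simp only [List.mem_cons, forall_eq_or_imp, exists_eq_or_imp]
      exact ⟨Or.inl le_rfl, fun b hb => Or.inr (hle b hb)⟩

/-- `⟨c, [a₁, …, a_k], p⟩` stands for `c f^{(a₁)} ⋯ f^{(a_k)} / (f')^p`; in `Term.eval` the
function `F a` plays the role of `f^{(a)}`. -/
structure Term where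
  coeff : ℝ
  orders : List ℕ
  pow : ℕ

namespace Term

def deriv (t : Term) : List Term :=
  ⟨-t.pow * t.coeff, 2 :: t.orders, t.pow + 1⟩ :: (bumps t.orders).map (⟨t.coeff, ·, t.pow⟩)

def negDiv (t : Term) : Term := ⟨-t.coeff, t.orders, t.pow + 1⟩

def eraseTwo (t : Term) : Term := ⟨t.coeff, t.orders.erase 2, t.pow⟩

structure Shape (i w : ℕ) (t : Term) : Prop where
  pow_eq : t.pow = i + t.orders.length
  sum_eq : t.orders.sum = w + t.orders.length
  two_le : ∀ a ∈ t.orders, 2 ≤ a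

variable {i w : ℕ} {t u : Term}

theorem Shape.of_mem_deriv (ht : t.Shape i w) (hu : u ∈ t.deriv) : u.Shape i (w + 1) := by
  obtain ⟨hp, hs, h2⟩ := ht
  simp only [deriv, List.mem_cons, List.mem_map] at hu
  rcases hu with rfl | ⟨l, hl, rfl⟩
  · refine ⟨?_, ?_, ?_⟩ <;> simp only [List.length_cons, List.sum_cons]
    · omega
    · omega
    · simpa using h2
  · obtain ⟨hlen, hsum, hle⟩ := of_mem_bumps hl
    refine ⟨by simp only; omega, by simp only; omega, fun b hb => ?_⟩
    obtain ⟨a, ha, hab⟩ := hle b hb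
    exact (h2 a ha).trans hab

theorem Shape.negDiv (ht : t.Shape i w) : t.negDiv.Shape (i + 1) w :=
  ⟨by simp only [Term.negDiv, ht.pow_eq]; omega, ht.sum_eq, ht.two_le⟩

theorem Shape.eraseTwo (ht : t.Shape i (w + 1)) (h2 : 2 ∈ t.orders) :
    t.eraseTwo.Shape (i + 1) w := by
  have hlen := List.length_erase_add_one h2
  have hsum := List.sum_erase h2
  refine ⟨?_, ?_, fun a ha => ht.two_le a (List.mem_of_mem_erase ha)⟩
  · have := ht.pow_eq; simp only [Term.eraseTwo]; omega
  · have := ht.sum_eq; simp only [Term.eraseTwo]; omega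

theorem Shape.length_le (ht : t.Shape i w) : t.orders.length ≤ w := by
  have := List.card_nsmul_le_sum t.orders 2 ht.two_le
  have := ht.sum_eq
  simp only [smul_eq_mul] at *
  omega

theorem Shape.length_pos (ht : t.Shape i w) (hw : w ≠ 0) : 0 < t.orders.length := by
  rcases t with ⟨c, _ | ⟨a, l⟩, p⟩
  · exact absurd ht.sum_eq (by simpa using Ne.symm hw)
  · simp

theorem Shape.le_of_mem (ht : t.Shape i w) {a : ℕ} (ha : a ∈ t.orders) : a ≤ w + 1 := by
  have hsum := List.sum_erase ha
  have hrest := List.card_nsmul_le_sum (t.orders.erase a) 2 fun b hb =>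
    ht.two_le b (List.mem_of_mem_erase hb)
  have hlen := List.length_erase_add_one ha
  have := ht.sum_eq
  simp only [smul_eq_mul] at hrest
  omega

end Term

def derivList (ts : List Term) : List Term := ts.flatMap Term.deriv

/-- `hTerms i` are the terms of `(2πi)^(i+1) H_{i+1}`. -/
def hTerms : ℕ → List Term
  | 0 => [⟨1, [], 1⟩]
  | i + 1 => (derivList (hTerms i)).map Term.negDiv

theorem shape_of_mem_derivList {ts : List Term} {i w : ℕ} (hts : ∀ t ∈ ts, t.Shape i w)
    {u : Term} (hu : u ∈ derivList ts) : u.Shape i (w + 1) := by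
  obtain ⟨t, ht, hut⟩ := List.mem_flatMap.1 hu
  exact (hts t ht).of_mem_deriv hut

theorem shape_of_mem_hTerms : ∀ {i : ℕ} {t : Term}, t ∈ hTerms i → t.Shape (i + 1) i
  | 0, t, ht => by
    rw [hTerms, List.mem_singleton] at ht
    subst ht
    exact ⟨rfl, rfl, by simp⟩
  | i + 1, t, ht => by
    obtain ⟨u, hu, rfl⟩ := List.mem_map.1 ht
    exact (shape_of_mem_derivList (fun _ => shape_of_mem_hTerms) hu).negDiv

theorem shape_of_mem_derivList_hTerms {i : ℕ} {t : Term} (ht : t ∈ derivList (hTerms i)) :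
    t.Shape (i + 1) (i + 1) :=
  shape_of_mem_derivList (fun _ => shape_of_mem_hTerms) ht

noncomputable def Term.eval (F : ℕ → ℝ → ℝ) (t : Term) (x : ℝ) : ℝ :=
  t.coeff * (t.orders.map (F · x)).prod / F 1 x ^ t.pow

noncomputable def evalSum (F : ℕ → ℝ → ℝ) (ts : List Term) (x : ℝ) : ℝ :=
  (ts.map (·.eval F x)).sum

section Evaluation

variable {F : ℕ → ℝ → ℝ} {s : Set ℝ} {x : ℝ}

@[simp] theorem evalSum_nil : evalSum F [] x = 0 := rfl

@[simp] theorem evalSum_cons (t : Term) (ts : List Term) :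
    evalSum F (t :: ts) x = t.eval F x + evalSum F ts x := List.sum_cons

@[simp] theorem evalSum_append (ts us : List Term) :
    evalSum F (ts ++ us) x = evalSum F ts x + evalSum F us x := by
  simp [evalSum]

theorem evalSum_map_negDiv (ts : List Term) :
    evalSum F (ts.map Term.negDiv) x = -(evalSum F ts x / F 1 x) := by
  induction ts with
  | nil => simp
  | cons t ts ih =>
    simp only [List.map_cons, evalSum_cons, ih, Term.eval, Term.negDiv, pow_succ]
    ring

theorem evalSum_hTerms_zero : evalSum F (hTerms 0) x = (F 1 x)⁻¹ := by
  simp [hTerms, Term.eval]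

theorem evalSum_hTerms_succ (i : ℕ) :
    evalSum F (hTerms (i + 1)) x = -(evalSum F (derivList (hTerms i)) x / F 1 x) :=
  evalSum_map_negDiv _

theorem hasDerivWithinAt_prod_bumps {l : List ℕ}
    (hl : ∀ a ∈ l, HasDerivWithinAt (F a) (F (a + 1) x) s x) :
    HasDerivWithinAt (fun y => (l.map (F · y)).prod)
      ((bumps l).map fun l' => (l'.map (F · x)).prod).sum s x := by
  induction l with
  | nil => simpa [bumps] using hasDerivWithinAt_const x s (1 : ℝ)
  | cons a l ih =>
    simp only [List.map_cons, List.prod_cons]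
    refine ((hl a List.mem_cons_self).fun_mul
      (ih fun b hb => hl b (List.mem_cons_of_mem a hb))).congr_deriv ?_
    simp [bumps, Function.comp_def, List.sum_map_mul_left]

theorem Term.hasDerivWithinAt_eval (t : Term)
    (hl : ∀ a ∈ t.orders, HasDerivWithinAt (F a) (F (a + 1) x) s x)
    (h1 : HasDerivWithinAt (F 1) (F 2 x) s x) (hx : F 1 x ≠ 0) :
    HasDerivWithinAt (t.eval F) (evalSum F t.deriv x) s x := by
  refine (((hasDerivWithinAt_prod_bumps hl).const_mul t.coeff).div (h1.pow t.pow)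
    (pow_ne_zero _ hx)).congr_deriv ?_
  simp only [deriv, evalSum, List.map_cons, List.map_map, Function.comp_def, eval, List.sum_cons,
    List.prod_cons, div_eq_mul_inv, List.sum_map_mul_left, List.sum_map_mul_right, Pi.pow_apply]
  rcases t with ⟨c, l, _ | p⟩
  · simp
  · simp only [Nat.add_sub_cancel]
    field_simp
    push_cast
    ring

theorem hasDerivWithinAt_evalSum {ts : List Term}
    (hts : ∀ t ∈ ts, ∀ a ∈ t.orders, HasDerivWithinAt (F a) (F (a + 1) x) s x)
    (h1 : HasDerivWithinAt (F 1) (F 2 x) s x) (hx : F 1 x ≠ 0) :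
    HasDerivWithinAt (evalSum F ts) (evalSum F (derivList ts) x) s x := by
  induction ts with
  | nil => exact hasDerivWithinAt_const x s (0 : ℝ)
  | cons t ts ih =>
    have h := (t.hasDerivWithinAt_eval (hts t List.mem_cons_self) h1 hx).fun_add
      (ih fun u hu => hts u (List.mem_cons_of_mem t hu))
    rw [derivList, List.flatMap_cons, evalSum_append]
    exact h.congr (fun y _ => evalSum_cons t ts) (evalSum_cons t ts)

theorem Term.continuousOn_eval (t : Term) (hl : ∀ a ∈ t.orders, ContinuousOn (F a) s)
    (h1 : ContinuousOn (F 1) s) (hs : ∀ x ∈ s, F 1 x ≠ 0) : ContinuousOn (t.eval F) s :=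
  (continuousOn_const.mul (continuousOn_list_prod _ hl)).div (h1.pow _)
    fun x hx => pow_ne_zero _ (hs x hx)

theorem continuousOn_evalSum {ts : List Term}
    (hts : ∀ t ∈ ts, ∀ a ∈ t.orders, ContinuousOn (F a) s)
    (h1 : ContinuousOn (F 1) s) (hs : ∀ x ∈ s, F 1 x ≠ 0) : ContinuousOn (evalSum F ts) s :=
  continuousOn_list_sum ts fun t ht => t.continuousOn_eval (hts t ht) h1 hs

end Evaluation

/-! ### Bounds for the terms -/

theorem abs_list_sum_le {ι : Type*} (L : List ι) (g : ι → ℝ) :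
    |(L.map g).sum| ≤ (L.map fun i => |g i|).sum := by
  simpa [Function.comp_def] using
    Multiset.abs_sum_le_sum_abs (s := ((L.map g : List ℝ) : Multiset ℝ))

noncomputable def Term.size (C : ℕ → ℝ) (t : Term) : ℝ :=
  |t.coeff| * (t.orders.map (|C ·|)).prod

theorem Term.size_nonneg (C : ℕ → ℝ) (t : Term) : 0 ≤ t.size C :=
  mul_nonneg (abs_nonneg _) (List.prod_nonneg (by simp))

noncomputable def errSum (n : ℕ) (m M T : ℝ) : ℝ :=
  ∑ j ∈ Finset.Icc 1 n, T ^ j / (m ^ (n + j + 1) * M ^ (n + j))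

section Bounds

variable {F : ℕ → ℝ → ℝ} {C : ℕ → ℝ} {M T m x : ℝ}

theorem errSum_nonneg (n : ℕ) (hT : 0 ≤ T) (hM : 0 < M) (hm : 0 < m) : 0 ≤ errSum n m M T :=
  Finset.sum_nonneg fun _ _ => by positivity

theorem le_errSum {n j : ℕ} (hT : 0 ≤ T) (hM : 0 < M) (hm : 0 < m) (hj : 1 ≤ j) (hjn : j ≤ n) :
    T ^ j / (m ^ (n + j + 1) * M ^ (n + j)) ≤ errSum n m M T :=
  Finset.single_le_sum (f := fun j => T ^ j / (m ^ (n + j + 1) * M ^ (n + j)))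
    (fun _ _ => by positivity) (Finset.mem_Icc.2 ⟨hj, hjn⟩)

theorem abs_list_prod_le (hT : 0 ≤ T) (hM : 0 < M) {l : List ℕ}
    (hl : ∀ a ∈ l, |F a x| ≤ C a * T / M ^ a) :
    |(l.map (F · x)).prod| ≤ (l.map (|C ·|)).prod * T ^ l.length / M ^ l.sum := by
  induction l with
  | nil => simp
  | cons a l ih =>
    have ha : |F a x| ≤ |C a| * T / M ^ a :=
      (hl a List.mem_cons_self).trans (by gcongr; exact le_abs_self _)
    have hrest := ih fun b hb => hl b (List.mem_cons_of_mem a hb)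
    have : 0 ≤ (l.map (|C ·|)).prod := List.prod_nonneg (by simp)
    calc |((a :: l).map (F · x)).prod| = |F a x| * |(l.map (F · x)).prod| := by simp [abs_mul]
      _ ≤ (|C a| * T / M ^ a) * ((l.map (|C ·|)).prod * T ^ l.length / M ^ l.sum) :=
        mul_le_mul ha hrest (abs_nonneg _) ((abs_nonneg _).trans ha)
      _ = _ := by
        simp only [List.map_cons, List.prod_cons, List.length_cons, List.sum_cons]
        field_simp
        ring

theorem Term.abs_eval_le (t : Term) (hT : 0 ≤ T) (hM : 0 < M) (hm : 0 < m)
    (hmx : m ≤ |F 1 x|) (hl : ∀ a ∈ t.orders, |F a x| ≤ C a * T / M ^ a) :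
    |t.eval F x| ≤ t.size C * T ^ t.orders.length / (M ^ t.orders.sum * m ^ t.pow) := by
  have : 0 ≤ (t.orders.map (|C ·|)).prod := List.prod_nonneg (by simp)
  calc |t.eval F x| = |t.coeff| * |(t.orders.map (F · x)).prod| / |F 1 x| ^ t.pow := by
        simp [eval, abs_mul, abs_div, abs_pow]
    _ ≤ |t.coeff| * ((t.orders.map (|C ·|)).prod * T ^ t.orders.length / M ^ t.orders.sum) /
        m ^ t.pow := by gcongr; exact abs_list_prod_le hT hM hl
    _ = _ := by rw [size]; field_simp

theorem Term.abs_eval_le_of_two_mem (t : Term) (h2 : 2 ∈ t.orders) (hT : 0 ≤ T) (hM : 0 < M)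
    (hl : ∀ a ∈ t.eraseTwo.orders, |F a x| ≤ C a * T / M ^ a) :
    |t.eval F x| ≤ t.eraseTwo.size C * T ^ t.eraseTwo.orders.length /
      M ^ t.eraseTwo.orders.sum * (|F 2 x| / |F 1 x| ^ t.pow) := by
  have : 0 ≤ ((t.orders.erase 2).map (|C ·|)).prod := List.prod_nonneg (by simp)
  calc |t.eval F x| = |t.coeff| * |((t.orders.erase 2).map (F · x)).prod| *
        (|F 2 x| / |F 1 x| ^ t.pow) := by
        rw [eval, ← List.prod_map_erase _ h2]
        simp only [abs_mul, abs_div, abs_pow]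
        ring
    _ ≤ |t.coeff| * (((t.orders.erase 2).map (|C ·|)).prod * T ^ (t.orders.erase 2).length /
        M ^ (t.orders.erase 2).sum) * (|F 2 x| / |F 1 x| ^ t.pow) := by
        gcongr; exact abs_list_prod_le hT hM hl
    _ = _ := by rw [size, eraseTwo]; ring

theorem Term.Shape.abs_eval_le_errSum {n : ℕ} {t : Term} (ht : t.Shape (n + 1) n) (hn : n ≠ 0)
    (hT : 0 ≤ T) (hM : 0 < M) (hm : 0 < m) (hmx : m ≤ |F 1 x|)
    (hb : ∀ r, 2 ≤ r → r ≤ n + 1 → |F r x| ≤ C r * T / M ^ r) :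
    |t.eval F x| ≤ t.size C * errSum n m M T := by
  have := t.size_nonneg C
  set k := t.orders.length
  calc |t.eval F x|
      ≤ t.size C * T ^ k / (M ^ t.orders.sum * m ^ t.pow) :=
        t.abs_eval_le hT hM hm hmx fun a ha => hb a (ht.two_le a ha) (ht.le_of_mem ha)
    _ = t.size C * (T ^ k / (m ^ (n + k + 1) * M ^ (n + k))) := by
        rw [ht.sum_eq, ht.pow_eq, show n + 1 + k = n + k + 1 by omega, mul_comm (M ^ _)]
        ring
    _ ≤ _ := by gcongr; exact le_errSum hT hM hm (ht.length_pos hn) ht.length_le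

theorem abs_evalSum_hTerms_le {n : ℕ} (hn : n ≠ 0) (hT : 0 ≤ T) (hM : 0 < M) (hm : 0 < m)
    (hmx : m ≤ |F 1 x|) (hb : ∀ r, 2 ≤ r → r ≤ n + 1 → |F r x| ≤ C r * T / M ^ r) :
    |evalSum F (hTerms n) x| ≤ ((hTerms n).map (Term.size C)).sum * errSum n m M T := by
  rw [← List.sum_map_mul_right]
  exact (abs_list_sum_le _ _).trans <| List.sum_le_sum fun t ht =>
    (shape_of_mem_hTerms ht).abs_eval_le_errSum hn hT hM hm hmx hb

end Bounds

theorem exists_abs_eq_mul_of_sign {g : ℝ → ℝ} {s : Set ℝ}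
    (hg : (∀ x ∈ s, 0 ≤ g x) ∨ ∀ x ∈ s, g x ≤ 0) :
    ∃ σ : ℝ, |σ| = 1 ∧ ∀ x ∈ s, |g x| = σ * g x := by
  rcases hg with hg | hg
  · exact ⟨1, abs_one, fun x hx => by rw [abs_of_nonneg (hg x hx), one_mul]⟩
  · exact ⟨-1, by simp, fun x hx => by rw [abs_of_nonpos (hg x hx), neg_one_mul]⟩

section IntervalBounds

variable {α β : ℝ}

theorem integral_eq_sub_of_hasDerivWithinAt_Icc {E : Type*} [NormedAddCommGroup E]
    [NormedSpace ℝ E] [CompleteSpace E] {f f' : ℝ → E} (hab : α ≤ β)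
    (hf : ∀ x ∈ Icc α β, HasDerivWithinAt f (f' x) (Icc α β) x)
    (hint : IntervalIntegrable f' volume α β) : ∫ x in α..β, f' x = f β - f α :=
  intervalIntegral.integral_eq_sub_of_hasDerivAt_of_le hab
    (fun x hx => (hf x hx).continuousWithinAt)
    (fun x hx => (hf x (Ioo_subset_Icc_self hx)).hasDerivAt (Icc_mem_nhds hx.1 hx.2)) hint

theorem integral_abs_div_pow_le {D D' : ℝ → ℝ} {m : ℝ} (hab : α ≤ β) (q : ℕ)
    (hD : ∀ x ∈ Icc α β, HasDerivWithinAt D (D' x) (Icc α β) x)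
    (hD'c : ContinuousOn D' (Icc α β)) (hm : 0 < m) (hmD : ∀ x ∈ Icc α β, m ≤ |D x|)
    (hDsign : (∀ x ∈ Icc α β, 0 ≤ D x) ∨ ∀ x ∈ Icc α β, D x ≤ 0)
    (hD'sign : (∀ x ∈ Icc α β, 0 ≤ D' x) ∨ ∀ x ∈ Icc α β, D' x ≤ 0) :
    ∫ x in α..β, |D' x| / |D x| ^ (q + 2) ≤ 2 / m ^ (q + 1) := by
  obtain ⟨σ₁, hσ₁, hσD⟩ := exists_abs_eq_mul_of_sign hDsign
  obtain ⟨σ₂, hσ₂, hσD'⟩ := exists_abs_eq_mul_of_sign hD'sign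
  have hD0 : ∀ x ∈ Icc α β, D x ≠ 0 := fun x hx => abs_pos.1 (hm.trans_le (hmD x hx))
  set ψ : ℝ → ℝ := fun x => -(((q : ℝ) + 1) * D x ^ (q + 1))⁻¹
  have hψ : ∀ x ∈ Icc α β, HasDerivWithinAt ψ (D' x / D x ^ (q + 2)) (Icc α β) x := by
    intro x hx
    refine ((((hD x hx).pow (q + 1)).const_mul ((q : ℝ) + 1)).inv
      (mul_ne_zero (by positivity) (pow_ne_zero _ (hD0 x hx)))).neg.congr_deriv ?_
    have := hD0 x hx
    simp only [Nat.add_sub_cancel, Pi.pow_apply]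
    field_simp
    push_cast
    ring
  have hDc : ContinuousOn D (Icc α β) := fun x hx => (hD x hx).continuousWithinAt
  have hint : IntervalIntegrable (fun x => D' x / D x ^ (q + 2)) volume α β :=
    (hD'c.div (hDc.pow _) fun x hx => pow_ne_zero _ (hD0 x hx)).intervalIntegrable_of_Icc hab
  have hψle : ∀ x ∈ Icc α β, |ψ x| ≤ 1 / m ^ (q + 1) := by
    intro x hx
    have hq : (1 : ℝ) ≤ (q : ℝ) + 1 := by simp
    have hmx := pow_le_pow_left₀ hm.le (hmD x hx) (q + 1)
    simp only [ψ, abs_neg, abs_inv, abs_mul, abs_pow, abs_of_pos (by positivity : (0 : ℝ) < q + 1)]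
    rw [one_div]
    gcongr
    nlinarith [pow_pos hm (q + 1)]
  calc ∫ x in α..β, |D' x| / |D x| ^ (q + 2)
      = ∫ x in α..β, σ₂ / σ₁ ^ (q + 2) * (D' x / D x ^ (q + 2)) := by
        refine intervalIntegral.integral_congr fun x hx => ?_
        rw [uIcc_of_le hab] at hx
        have hσ₁0 : σ₁ ≠ 0 := by rintro rfl; simp at hσ₁
        rw [hσD' x hx, hσD x hx, mul_pow]
        field_simp
    _ = σ₂ / σ₁ ^ (q + 2) * (ψ β - ψ α) := by
        rw [intervalIntegral.integral_const_mul,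
          integral_eq_sub_of_hasDerivWithinAt_Icc hab hψ hint]
    _ ≤ |ψ β| + |ψ α| := by
        refine (le_abs_self _).trans ?_
        rw [abs_mul, abs_div, abs_pow, hσ₁, hσ₂, one_pow, div_one, one_mul]
        exact abs_sub _ _
    _ ≤ 1 / m ^ (q + 1) + 1 / m ^ (q + 1) :=
        add_le_add (hψle β (right_mem_Icc.2 hab)) (hψle α (left_mem_Icc.2 hab))
    _ = 2 / m ^ (q + 1) := by ring

theorem integral_abs_list_sum_le {ι : Type*} (hab : α ≤ β) (L : List ι) {g : ι → ℝ → ℝ}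
    (hg : ∀ i ∈ L, ContinuousOn (g i) (Icc α β)) :
    ∫ x in α..β, |(L.map (g · x)).sum| ≤ (L.map fun i => ∫ x in α..β, |g i x|).sum := by
  induction L with
  | nil => simp
  | cons i L ih =>
    have hgi := hg i List.mem_cons_self
    have hS := continuousOn_list_sum L fun j hj => hg j (List.mem_cons_of_mem i hj)
    have hgi_int : IntervalIntegrable (fun x => |g i x|) volume α β :=
      hgi.abs.intervalIntegrable_of_Icc hab
    have hS_int : IntervalIntegrable (fun x => |(L.map (g · x)).sum|) volume α β :=
      hS.abs.intervalIntegrable_of_Icc hab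
    calc ∫ x in α..β, |((i :: L).map (g · x)).sum|
        ≤ ∫ x in α..β, (|g i x| + |(L.map (g · x)).sum|) := by
          refine intervalIntegral.integral_mono_on hab ?_ (hgi_int.add hS_int) fun x _ => ?_
          · simpa using (hgi.add hS).abs.intervalIntegrable_of_Icc hab
          · simpa using abs_add_le _ _
      _ = (∫ x in α..β, |g i x|) + ∫ x in α..β, |(L.map (g · x)).sum| :=
          intervalIntegral.integral_add hgi_int hS_int
      _ ≤ _ := by simpa using ih fun j hj => hg j (List.mem_cons_of_mem i hj)

variable {F : ℕ → ℝ → ℝ} {C : ℕ → ℝ} {M T m : ℝ}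

theorem Term.Shape.integral_abs_eval_le_of_two_mem {n : ℕ} {t : Term}
    (ht : t.Shape (n + 1) (n + 1)) (hn : n ≠ 0) (h2 : 2 ∈ t.orders) (hab : α ≤ β)
    (hT : 0 ≤ T) (hM : 0 < M) (hm : 0 < m) (hmF : ∀ x ∈ Icc α β, m ≤ |F 1 x|)
    (hb : ∀ r, 2 ≤ r → r ≤ n + 2 → ∀ x ∈ Icc α β, |F r x| ≤ C r * T / M ^ r)
    (hc : ∀ a ∈ t.orders, ContinuousOn (F a) (Icc α β))
    (hF1 : ∀ x ∈ Icc α β, HasDerivWithinAt (F 1) (F 2 x) (Icc α β) x)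
    (hsign1 : (∀ x ∈ Icc α β, 0 ≤ F 1 x) ∨ ∀ x ∈ Icc α β, F 1 x ≤ 0)
    (hsign2 : (∀ x ∈ Icc α β, 0 ≤ F 2 x) ∨ ∀ x ∈ Icc α β, F 2 x ≤ 0) :
    ∫ x in α..β, |t.eval F x| ≤ 2 * t.eraseTwo.size C * errSum n m M T := by
  have he := ht.eraseTwo h2
  set j := t.eraseTwo.orders.length
  have hpow : t.pow = n + j + 2 := he.pow_eq.trans (by omega)
  set B := t.eraseTwo.size C * T ^ j / M ^ (n + j)
  have hB : 0 ≤ B := by have := t.eraseTwo.size_nonneg C; positivity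
  have hF10 : ∀ x ∈ Icc α β, F 1 x ≠ 0 := fun x hx => abs_pos.1 (hm.trans_le (hmF x hx))
  have hF1c : ContinuousOn (F 1) (Icc α β) := fun x hx => (hF1 x hx).continuousWithinAt
  have hpt : ∀ x ∈ Icc α β, |t.eval F x| ≤ B * (|F 2 x| / |F 1 x| ^ (n + j + 2)) := by
    intro x hx
    have := t.abs_eval_le_of_two_mem h2 hT hM fun a ha =>
      hb a (he.two_le a ha) (by have := he.le_of_mem ha; omega) x hx
    rwa [he.sum_eq, hpow] at this
  calc ∫ x in α..β, |t.eval F x|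
      ≤ ∫ x in α..β, B * (|F 2 x| / |F 1 x| ^ (n + j + 2)) := by
        refine intervalIntegral.integral_mono_on hab ?_ ?_ hpt
        · exact ((t.continuousOn_eval hc hF1c hF10).abs).intervalIntegrable_of_Icc hab
        · exact (continuousOn_const.mul ((hc 2 h2).abs.div (hF1c.abs.pow _) fun x hx =>
            pow_ne_zero _ (abs_ne_zero.2 (hF10 x hx)))).intervalIntegrable_of_Icc hab
    _ = B * ∫ x in α..β, |F 2 x| / |F 1 x| ^ (n + j + 2) :=
        intervalIntegral.integral_const_mul _ _
    _ ≤ B * (2 / m ^ (n + j + 1)) := by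
        gcongr
        exact integral_abs_div_pow_le hab (n + j) hF1 (hc 2 h2) hm hmF hsign1 hsign2
    _ = 2 * t.eraseTwo.size C * (T ^ j / (m ^ (n + j + 1) * M ^ (n + j))) := by
        simp only [B]; field_simp
    _ ≤ _ := by
        have := t.eraseTwo.size_nonneg C
        gcongr
        exact le_errSum hT hM hm (he.length_pos hn) he.length_le

theorem Term.Shape.integral_abs_eval_le_of_two_notMem {n : ℕ} {t : Term}
    (ht : t.Shape (n + 1) (n + 1)) (h2 : 2 ∉ t.orders) (hab : α ≤ β)
    (hβα : β - α ≤ M) (hT : 0 ≤ T) (hM : 0 < M) (hm : 0 < m)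
    (hmF : ∀ x ∈ Icc α β, m ≤ |F 1 x|)
    (hb : ∀ r, 2 ≤ r → r ≤ n + 2 → ∀ x ∈ Icc α β, |F r x| ≤ C r * T / M ^ r) :
    ∫ x in α..β, |t.eval F x| ≤ t.size C * errSum n m M T := by
  set k := t.orders.length
  have hk1 := ht.length_pos (Nat.succ_ne_zero n)
  have hkn : k ≤ n := by
    have h3 := List.card_nsmul_le_sum t.orders 3 fun a ha =>
      lt_of_le_of_ne (ht.two_le a ha) (fun h => h2 (h ▸ ha))
    have := ht.sum_eq
    simp only [smul_eq_mul] at h3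
    omega
  set A := t.size C * T ^ k / (M ^ (n + 1 + k) * m ^ (n + 1 + k))
  have hA : 0 ≤ A := by have := t.size_nonneg C; positivity
  have hpt : ∀ x ∈ Ι α β, ‖|t.eval F x|‖ ≤ A := by
    intro x hx
    have hx' : x ∈ Icc α β := Ioc_subset_Icc_self (by rwa [uIoc_of_le hab] at hx)
    rw [Real.norm_eq_abs, abs_abs]
    have := t.abs_eval_le hT hM hm (hmF x hx') fun a ha =>
      hb a (ht.two_le a ha) (by have := ht.le_of_mem ha; omega) x hx'
    rwa [ht.sum_eq, ht.pow_eq] at this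
  calc ∫ x in α..β, |t.eval F x| ≤ ‖∫ x in α..β, |t.eval F x|‖ := le_abs_self _
    _ ≤ A * |β - α| := intervalIntegral.norm_integral_le_of_norm_le_const hpt
    _ ≤ A * M := by gcongr; rwa [abs_of_nonneg (sub_nonneg.2 hab)]
    _ = t.size C * (T ^ k / (m ^ (n + k + 1) * M ^ (n + k))) := by
        simp only [A, show n + 1 + k = n + k + 1 by omega, pow_succ]
        field_simp
    _ ≤ _ := by
        have := t.size_nonneg C
        gcongr
        exact le_errSum hT hM hm hk1 hkn

theorem Term.Shape.integral_abs_eval_le {n : ℕ} {t : Term}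
    (ht : t.Shape (n + 1) (n + 1)) (hn : n ≠ 0) (hab : α ≤ β) (hβα : β - α ≤ M)
    (hT : 0 ≤ T) (hM : 0 < M) (hm : 0 < m) (hmF : ∀ x ∈ Icc α β, m ≤ |F 1 x|)
    (hb : ∀ r, 2 ≤ r → r ≤ n + 2 → ∀ x ∈ Icc α β, |F r x| ≤ C r * T / M ^ r)
    (hc : ∀ a ∈ t.orders, ContinuousOn (F a) (Icc α β))
    (hF1 : ∀ x ∈ Icc α β, HasDerivWithinAt (F 1) (F 2 x) (Icc α β) x)
    (hsign1 : (∀ x ∈ Icc α β, 0 ≤ F 1 x) ∨ ∀ x ∈ Icc α β, F 1 x ≤ 0)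
    (hsign2 : (∀ x ∈ Icc α β, 0 ≤ F 2 x) ∨ ∀ x ∈ Icc α β, F 2 x ≤ 0) :
    ∫ x in α..β, |t.eval F x| ≤ 2 * t.eraseTwo.size C * errSum n m M T := by
  by_cases h2 : 2 ∈ t.orders
  · exact ht.integral_abs_eval_le_of_two_mem hn h2 hab hT hM hm hmF hb hc hF1 hsign1 hsign2
  · have hsize : t.eraseTwo.size C = t.size C := by
      rw [Term.eraseTwo, List.erase_of_not_mem h2]
    rw [hsize]
    have := mul_nonneg (t.size_nonneg C) (errSum_nonneg n hT hM hm)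
    linarith [ht.integral_abs_eval_le_of_two_notMem h2 hab hβα hT hM hm hmF hb]

theorem integral_abs_evalSum_derivList_hTerms_le {n : ℕ} (hn : n ≠ 0) (hab : α ≤ β)
    (hβα : β - α ≤ M) (hT : 0 ≤ T) (hM : 0 < M) (hm : 0 < m)
    (hmF : ∀ x ∈ Icc α β, m ≤ |F 1 x|)
    (hb : ∀ r, 2 ≤ r → r ≤ n + 2 → ∀ x ∈ Icc α β, |F r x| ≤ C r * T / M ^ r)
    (hc : ∀ a ≤ n + 2, ContinuousOn (F a) (Icc α β))
    (hF1 : ∀ x ∈ Icc α β, HasDerivWithinAt (F 1) (F 2 x) (Icc α β) x)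
    (hsign1 : (∀ x ∈ Icc α β, 0 ≤ F 1 x) ∨ ∀ x ∈ Icc α β, F 1 x ≤ 0)
    (hsign2 : (∀ x ∈ Icc α β, 0 ≤ F 2 x) ∨ ∀ x ∈ Icc α β, F 2 x ≤ 0) :
    ∫ x in α..β, |evalSum F (derivList (hTerms n)) x| ≤
      ((derivList (hTerms n)).map fun t => 2 * t.eraseTwo.size C).sum * errSum n m M T := by
  have hct : ∀ t ∈ derivList (hTerms n), ∀ a ∈ t.orders, ContinuousOn (F a) (Icc α β) :=
    fun t ht a ha => hc a ((shape_of_mem_derivList_hTerms ht).le_of_mem ha)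
  have hF1c : ContinuousOn (F 1) (Icc α β) := fun x hx => (hF1 x hx).continuousWithinAt
  have hF10 : ∀ x ∈ Icc α β, F 1 x ≠ 0 := fun x hx => abs_pos.1 (hm.trans_le (hmF x hx))
  rw [← List.sum_map_mul_right]
  exact (integral_abs_list_sum_le hab _ fun t ht =>
    t.continuousOn_eval (hct t ht) hF1c hF10).trans <| List.sum_le_sum fun t ht =>
      (shape_of_mem_derivList_hTerms ht).integral_abs_eval_le hn hab hβα hT hM hm hmF hb
        (hct t ht) hF1 hsign1 hsign2

end IntervalBounds

/-! ### Integration by parts against `e(f)` -/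

theorem norm_e (t : ℝ) : ‖e t‖ = 1 := by
  rw [e, norm_exp]
  simp

theorem hasDerivWithinAt_e_comp {f : ℝ → ℝ} {f' x : ℝ} {s : Set ℝ}
    (hf : HasDerivWithinAt f f' s x) :
    HasDerivWithinAt (fun y => e (f y)) (e (f x) * (2 * π * I * f')) s x :=
  (hf.ofReal_comp.const_mul (2 * π * I)).cexp

theorem mul_sum_Icc_add_sum_Icc {R : Type*} [CommRing R] (c : R) (a b : ℕ → R) (N : ℕ)
    (h₁ : c * a 1 = 1) (hsucc : ∀ i ∈ Finset.Icc 1 N, c * a (i + 1) = -b i) :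
    c * ∑ i ∈ Finset.Icc 1 (N + 1), a i + ∑ i ∈ Finset.Icc 1 (N + 1), b i = 1 + b (N + 1) := by
  induction N with
  | zero => simp [h₁]
  | succ N ih =>
    rw [Finset.sum_Icc_succ_top (by omega) a, Finset.sum_Icc_succ_top (by omega) b,
      mul_add, hsucc (N + 1) (Finset.mem_Icc.2 ⟨by omega, le_rfl⟩)]
    linear_combination ih fun i hi => hsucc i (Finset.mem_Icc.2
      ⟨(Finset.mem_Icc.1 hi).1, (Finset.mem_Icc.1 hi).2.trans (Nat.le_succ N)⟩)

section Oscillation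

variable {f f' : ℝ → ℝ} {G G' : ℕ → ℝ → ℂ} {α β : ℝ}

theorem integral_e_eq (N : ℕ) (hab : α ≤ β)
    (hf : ∀ x ∈ Icc α β, HasDerivWithinAt f (f' x) (Icc α β) x)
    (hG : ∀ i ∈ Finset.Icc 1 (N + 1), ∀ x ∈ Icc α β,
      HasDerivWithinAt (G i) (G' i x) (Icc α β) x)
    (hG₁ : ∀ x ∈ Icc α β, 2 * π * I * f' x * G 1 x = 1)
    (hGsucc : ∀ i ∈ Finset.Icc 1 N, ∀ x ∈ Icc α β, 2 * π * I * f' x * G (i + 1) x = -G' i x)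
    (hint : IntervalIntegrable (G' (N + 1)) volume α β) :
    ∫ x in α..β, e (f x) = e (f β) * ∑ i ∈ Finset.Icc 1 (N + 1), G i β -
      e (f α) * ∑ i ∈ Finset.Icc 1 (N + 1), G i α - ∫ x in α..β, e (f x) * G' (N + 1) x := by
  have hec : ContinuousOn (fun x => e (f x)) (Icc α β) := fun x hx =>
    (hasDerivWithinAt_e_comp (hf x hx)).continuousWithinAt
  have hΦ : ∀ x ∈ Icc α β,
      HasDerivWithinAt (fun y => e (f y) * ∑ i ∈ Finset.Icc 1 (N + 1), G i y)
        (e (f x) * 1 + e (f x) * G' (N + 1) x) (Icc α β) x := by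
    intro x hx
    refine ((hasDerivWithinAt_e_comp (hf x hx)).fun_mul
      (HasDerivWithinAt.fun_sum fun i hi => hG i hi x hx)).congr_deriv ?_
    rw [← mul_add, ← mul_sum_Icc_add_sum_Icc _ (G · x) (G' · x) N (hG₁ x hx)
      fun i hi => hGsucc i hi x hx]
    ring
  have he_int : IntervalIntegrable (fun x => e (f x)) volume α β :=
    hec.intervalIntegrable_of_Icc hab
  have heG_int := hint.continuousOn_mul (uIcc_of_le hab ▸ hec)
  rw [← integral_eq_sub_of_hasDerivWithinAt_Icc hab hΦ ((he_int.mul_const 1).add heG_int),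
    intervalIntegral.integral_add (he_int.mul_const 1) heG_int]
  simp

theorem norm_integral_e_sub_le (N : ℕ) (hab : α ≤ β)
    (hf : ∀ x ∈ Icc α β, HasDerivWithinAt f (f' x) (Icc α β) x)
    (hG : ∀ i ∈ Finset.Icc 1 (N + 1), ∀ x ∈ Icc α β,
      HasDerivWithinAt (G i) (G' i x) (Icc α β) x)
    (hG₁ : ∀ x ∈ Icc α β, 2 * π * I * f' x * G 1 x = 1)
    (hGsucc : ∀ i ∈ Finset.Icc 1 N, ∀ x ∈ Icc α β, 2 * π * I * f' x * G (i + 1) x = -G' i x)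
    (hint : IntervalIntegrable (G' (N + 1)) volume α β) :
    ‖(∫ x in α..β, e (f x)) -
        (e (f β) * ∑ i ∈ Finset.Icc 1 N, G i β - e (f α) * ∑ i ∈ Finset.Icc 1 N, G i α)‖ ≤
      ‖G (N + 1) β‖ + ‖G (N + 1) α‖ + ∫ x in α..β, ‖G' (N + 1) x‖ := by
  rw [integral_e_eq N hab hf hG hG₁ hGsucc hint, Finset.sum_Icc_succ_top (by omega),
    Finset.sum_Icc_succ_top (by omega)]
  calc _ = ‖e (f β) * G (N + 1) β - e (f α) * G (N + 1) α -
        ∫ x in α..β, e (f x) * G' (N + 1) x‖ := by ring_nf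
    _ ≤ ‖e (f β) * G (N + 1) β‖ + ‖e (f α) * G (N + 1) α‖ +
        ‖∫ x in α..β, e (f x) * G' (N + 1) x‖ := norm_sub_le_of_le (norm_sub_le _ _) le_rfl
    _ ≤ _ := by
        simp only [norm_mul, norm_e, one_mul]
        gcongr
        exact (intervalIntegral.norm_integral_le_integral_norm hab).trans_eq (by simp [norm_e])

end Oscillation

/-! ### The functions `H_i` -/

noncomputable def hFun (F : ℕ → ℝ → ℝ) (i : ℕ) (x : ℝ) : ℂ :=
  evalSum F (hTerms (i - 1)) x / (2 * π * I) ^ i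

noncomputable def hFunDeriv (F : ℕ → ℝ → ℝ) (i : ℕ) (x : ℝ) : ℂ :=
  evalSum F (derivList (hTerms (i - 1))) x / (2 * π * I) ^ i

theorem norm_ofReal_div_two_pi_I_pow (r : ℝ) (i : ℕ) :
    ‖(r : ℂ) / (2 * π * I) ^ i‖ = |r| / (2 * π) ^ i := by
  simp [abs_of_pos Real.pi_pos]

theorem one_le_two_pi_pow (i : ℕ) : 1 ≤ (2 * π) ^ i :=
  one_le_pow₀ (by linarith [Real.pi_gt_three])

section HFun

variable {F : ℕ → ℝ → ℝ} {s : Set ℝ} {x : ℝ}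

theorem hasDerivWithinAt_hFun {i : ℕ} (hi : i ≠ 0)
    (hF : ∀ a, 1 ≤ a → a ≤ i → HasDerivWithinAt (F a) (F (a + 1) x) s x) (hx : F 1 x ≠ 0) :
    HasDerivWithinAt (hFun F i) (hFunDeriv F i x) s x := by
  obtain ⟨j, rfl⟩ := Nat.exists_eq_succ_of_ne_zero hi
  refine (hasDerivWithinAt_evalSum (fun t ht a ha => hF a ?_ ?_) (hF 1 le_rfl (by omega))
    hx).ofReal_comp.div_const _
  · exact ((shape_of_mem_hTerms ht).two_le a ha).trans' (by norm_num)
  · exact (shape_of_mem_hTerms ht).le_of_mem ha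

theorem continuousOn_hFunDeriv {i : ℕ} (hi : i ≠ 0)
    (hF : ∀ a, 1 ≤ a → a ≤ i + 1 → ContinuousOn (F a) s) (hF0 : ∀ x ∈ s, F 1 x ≠ 0) :
    ContinuousOn (hFunDeriv F i) s := by
  obtain ⟨j, rfl⟩ := Nat.exists_eq_succ_of_ne_zero hi
  refine (continuous_ofReal.comp_continuousOn (continuousOn_evalSum
    (fun t ht a ha => hF a ?_ ?_) (hF 1 le_rfl (by omega)) hF0)).div_const _
  · exact ((shape_of_mem_derivList_hTerms ht).two_le a ha).trans' (by norm_num)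
  · exact (shape_of_mem_derivList_hTerms ht).le_of_mem ha

theorem two_pi_I_mul_hFun_one (hx : F 1 x ≠ 0) : 2 * π * I * F 1 x * hFun F 1 x = 1 := by
  have : (F 1 x : ℂ) ≠ 0 := ofReal_ne_zero.2 hx
  simp only [hFun, Nat.sub_self, evalSum_hTerms_zero, pow_one]
  push_cast
  field_simp

theorem two_pi_I_mul_hFun_succ {i : ℕ} (hi : i ≠ 0) (hx : F 1 x ≠ 0) :
    2 * π * I * F 1 x * hFun F (i + 1) x = -hFunDeriv F i x := by
  obtain ⟨j, rfl⟩ := Nat.exists_eq_succ_of_ne_zero hi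
  have : (F 1 x : ℂ) ≠ 0 := ofReal_ne_zero.2 hx
  simp only [hFun, hFunDeriv, Nat.succ_sub_one, evalSum_hTerms_succ]
  push_cast
  field_simp
  ring

theorem eqOn_hFun {n : ℕ} {H : ℕ → ℝ → ℂ} (hs : UniqueDiffOn ℝ s)
    (hF : ∀ a, 1 ≤ a → a < n → ∀ x ∈ s, HasDerivWithinAt (F a) (F (a + 1) x) s x)
    (hF0 : ∀ x ∈ s, F 1 x ≠ 0) (hH₁ : ∀ x ∈ s, H 1 x = 1 / (2 * π * I * F 1 x))
    (hHsucc : ∀ i, 2 ≤ i → i ≤ n → ∀ x ∈ s,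
      H i x = -derivWithin (H (i - 1)) s x / (2 * π * I * F 1 x)) :
    ∀ i, 1 ≤ i → i ≤ n → ∀ x ∈ s, H i x = hFun F i x := by
  intro i hi
  induction i, hi using Nat.le_induction with
  | base =>
    intro _ x hx
    rw [hH₁ x hx]
    exact (eq_one_div_of_mul_eq_one_right (two_pi_I_mul_hFun_one (hF0 x hx))).symm
  | succ i hi ih =>
    intro hin x hx
    have hderiv : derivWithin (H i) s x = hFunDeriv F i x := by
      rw [derivWithin_congr (fun y hy => ih (by omega) y hy) (ih (by omega) x hx)]
      exact (hasDerivWithinAt_hFun (by omega) (fun a ha hai => hF a ha (by omega) x hx)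
        (hF0 x hx)).derivWithin (hs x hx)
    rw [hHsucc (i + 1) (by omega) hin x hx, Nat.add_sub_cancel, hderiv,
      ← two_pi_I_mul_hFun_succ (by omega) (hF0 x hx), mul_div_cancel_left₀]
    simpa using hF0 x hx

theorem norm_hFun_succ_le (i : ℕ) (x : ℝ) : ‖hFun F (i + 1) x‖ ≤ |evalSum F (hTerms i) x| := by
  rw [hFun, norm_ofReal_div_two_pi_I_pow]
  exact div_le_self (abs_nonneg _) (one_le_two_pi_pow _)

theorem integral_norm_hFunDeriv_succ_le {α β : ℝ} (hab : α ≤ β) (i : ℕ) :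
    ∫ x in α..β, ‖hFunDeriv F (i + 1) x‖ ≤
      ∫ x in α..β, |evalSum F (derivList (hTerms i)) x| := by
  simp only [hFunDeriv, norm_ofReal_div_two_pi_I_pow, intervalIntegral.integral_div]
  exact div_le_self (intervalIntegral.integral_nonneg hab fun _ _ => abs_nonneg _)
    (one_le_two_pi_pow _)

end HFun

/-! ### The first derivative test -/

theorem ContDiffOn.hasDerivWithinAt_iteratedDerivWithin {f : ℝ → ℝ} {s : Set ℝ} {N a : ℕ}
    (hf : ContDiffOn ℝ N f s) (hs : UniqueDiffOn ℝ s) (ha : a < N) {x : ℝ} (hx : x ∈ s) :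
    HasDerivWithinAt (iteratedDerivWithin a f s) (iteratedDerivWithin (a + 1) f s x) s x := by
  rw [iteratedDerivWithin_succ]
  exact (hf.differentiableOn_iteratedDerivWithin (by exact_mod_cast ha) hs x hx).hasDerivWithinAt

theorem sInf_image_abs_pos {g : ℝ → ℝ} {s : Set ℝ} (hs : IsCompact s) (hne : s.Nonempty)
    (hg : ContinuousOn g s) (h0 : ∀ x ∈ s, g x ≠ 0) : 0 < sInf ((fun x => |g x|) '' s) := by
  obtain ⟨x, hx, hxm⟩ := (hs.image_of_continuousOn hg.abs).sInf_mem (hne.image _)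
  rw [← hxm]
  exact abs_pos.2 (h0 x hx)

theorem sInf_image_abs_le {g : ℝ → ℝ} {s : Set ℝ} {x : ℝ} (hx : x ∈ s) :
    sInf ((fun x => |g x|) '' s) ≤ |g x| :=
  csInf_le ⟨0, by rintro _ ⟨y, _, rfl⟩; exact abs_nonneg _⟩ ⟨x, hx, rfl⟩

noncomputable def errConst (n : ℕ) (C : ℕ → ℝ) : ℝ :=
  2 * ((hTerms n).map (Term.size C)).sum +
    ((derivList (hTerms n)).map fun t => 2 * t.eraseTwo.size C).sum + 1

theorem errConst_pos (n : ℕ) (C : ℕ → ℝ) : 0 < errConst n C := by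
  have h₁ : 0 ≤ ((hTerms n).map (Term.size C)).sum :=
    List.sum_nonneg (by simpa using fun t _ => t.size_nonneg C)
  have h₂ : 0 ≤ ((derivList (hTerms n)).map fun t => 2 * t.eraseTwo.size C).sum :=
    List.sum_nonneg (by simpa using fun t _ => t.eraseTwo.size_nonneg C)
  rw [errConst]
  linarith

theorem norm_integral_e_sub_sum_hFun_le {n : ℕ} (hn : n ≠ 0) {F : ℕ → ℝ → ℝ} {f : ℝ → ℝ}
    {C : ℕ → ℝ} {α β M T m : ℝ} (hab : α ≤ β) (hβα : β - α ≤ M) (hT : 0 ≤ T) (hM : 0 < M)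
    (hm : 0 < m) (hf : ∀ x ∈ Icc α β, HasDerivWithinAt f (F 1 x) (Icc α β) x)
    (hFd : ∀ a ≤ n + 1, ∀ x ∈ Icc α β, HasDerivWithinAt (F a) (F (a + 1) x) (Icc α β) x)
    (hFc : ∀ a ≤ n + 2, ContinuousOn (F a) (Icc α β)) (hmF : ∀ x ∈ Icc α β, m ≤ |F 1 x|)
    (hb : ∀ r, 2 ≤ r → r ≤ n + 2 → ∀ x ∈ Icc α β, |F r x| ≤ C r * T / M ^ r)
    (hsign1 : (∀ x ∈ Icc α β, 0 ≤ F 1 x) ∨ ∀ x ∈ Icc α β, F 1 x ≤ 0)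
    (hsign2 : (∀ x ∈ Icc α β, 0 ≤ F 2 x) ∨ ∀ x ∈ Icc α β, F 2 x ≤ 0) :
    ‖(∫ x in α..β, e (f x)) - (e (f β) * ∑ i ∈ Finset.Icc 1 n, hFun F i β -
        e (f α) * ∑ i ∈ Finset.Icc 1 n, hFun F i α)‖ ≤ errConst n C * errSum n m M T := by
  have hF10 : ∀ x ∈ Icc α β, F 1 x ≠ 0 := fun x hx => abs_pos.1 (hm.trans_le (hmF x hx))
  refine (norm_integral_e_sub_le (G := hFun F) (G' := hFunDeriv F) n hab hf
    (fun i hi x hx => hasDerivWithinAt_hFun (by simp at hi; omega)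
      (fun a _ ha => hFd a (by simp at hi; omega) x hx) (hF10 x hx))
    (fun x hx => two_pi_I_mul_hFun_one (hF10 x hx))
    (fun i hi x hx => two_pi_I_mul_hFun_succ (by simp at hi; omega) (hF10 x hx))
    ((continuousOn_hFunDeriv (by omega) (fun a _ ha => hFc a ha) hF10).intervalIntegrable_of_Icc
      hab)).trans ?_
  have hH : ∀ x ∈ Icc α β,
      ‖hFun F (n + 1) x‖ ≤ ((hTerms n).map (Term.size C)).sum * errSum n m M T := fun x hx =>
    (norm_hFun_succ_le n x).trans (abs_evalSum_hTerms_le hn hT hM hm (hmF x hx)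
      fun r h2 hr => hb r h2 (by omega) x hx)
  have hint := (integral_norm_hFunDeriv_succ_le hab n).trans
    (integral_abs_evalSum_derivList_hTerms_le hn hab hβα hT hM hm hmF hb hFc
      (hFd 1 (by omega)) hsign1 hsign2)
  have := errSum_nonneg n hT hM hm
  rw [errConst]
  nlinarith [hH β (right_mem_Icc.2 hab), hH α (left_mem_Icc.2 hab)]

end FirstDerivTest

open FirstDerivTest in
theorem weighted_stationary_phase_stmt1_general
    (n : ℕ) (hn : 1 ≤ n) (C : ℕ → ℝ) :
    ∃ K : ℝ, 0 < K ∧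
      ∀ (α β M T : ℝ) (f : ℝ → ℝ) (H : ℕ → ℝ → ℂ),
        α < β → 0 < M → 0 < T → β - α ≤ M →
        ContDiffOn ℝ (n + 2) f (Set.Icc α β) →
        (∀ r, 2 ≤ r → r ≤ n + 2 → ∀ x ∈ Set.Icc α β,
          |iteratedDerivWithin r f (Set.Icc α β) x| ≤ C r * T / M ^ r) →
        ((∀ x ∈ Set.Icc α β, 0 ≤ derivWithin f (Set.Icc α β) x) ∨
          (∀ x ∈ Set.Icc α β, derivWithin f (Set.Icc α β) x ≤ 0)) →
        ((∀ x ∈ Set.Icc α β, 0 ≤ iteratedDerivWithin 2 f (Set.Icc α β) x) ∨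
          (∀ x ∈ Set.Icc α β, iteratedDerivWithin 2 f (Set.Icc α β) x ≤ 0)) →
        (∀ x ∈ Set.Icc α β, derivWithin f (Set.Icc α β) x ≠ 0) →
        (∀ x ∈ Set.Icc α β, H 1 x =
          1 / (2 * Real.pi * Complex.I * derivWithin f (Set.Icc α β) x)) →
        (∀ i, 2 ≤ i → i ≤ n → ∀ x ∈ Set.Icc α β, H i x =
          -(derivWithin (H (i - 1)) (Set.Icc α β) x) /
            (2 * Real.pi * Complex.I * derivWithin f (Set.Icc α β) x)) →
        ‖(∫ x in α..β, e (f x)) -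
            (e (f β) * ∑ i ∈ Finset.Icc 1 n, H i β -
             e (f α) * ∑ i ∈ Finset.Icc 1 n, H i α)‖ ≤
          K * ∑ j ∈ Finset.Icc 1 n,
            T ^ j /
              ((sInf ((fun x => |derivWithin f (Set.Icc α β) x|) '' Set.Icc α β)) ^ (n + j + 1) *
                M ^ (n + j)) := by
  refine ⟨errConst n C, errConst_pos n C, ?_⟩
  intro α β M T f H hαβ hM hT hβα hf hb hsign1 hsign2 hne hH₁ hHsucc
  set F : ℕ → ℝ → ℝ := fun a => iteratedDerivWithin a f (Icc α β)
  have hF1 : derivWithin f (Icc α β) = F 1 := iteratedDerivWithin_one.symm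
  rw [hF1] at hsign1 hne hH₁ hHsucc ⊢
  have hs := uniqueDiffOn_Icc hαβ
  have hFd : ∀ a ≤ n + 1, ∀ x ∈ Icc α β, HasDerivWithinAt (F a) (F (a + 1) x) (Icc α β) x :=
    fun a ha x hx => hf.hasDerivWithinAt_iteratedDerivWithin (N := n + 2) hs (by omega) hx
  have hFc : ∀ a ≤ n + 2, ContinuousOn (F a) (Icc α β) := fun a ha =>
    hf.continuousOn_iteratedDerivWithin (by exact_mod_cast ha) hs
  have hHG : ∀ x ∈ Icc α β, ∑ i ∈ Finset.Icc 1 n, H i x = ∑ i ∈ Finset.Icc 1 n, hFun F i x :=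
    fun x hx => Finset.sum_congr rfl fun i hi => eqOn_hFun hs (fun a _ ha => hFd a (by omega))
      hne hH₁ hHsucc i (Finset.mem_Icc.1 hi).1 (Finset.mem_Icc.1 hi).2 x hx
  rw [hHG β (right_mem_Icc.2 hαβ.le), hHG α (left_mem_Icc.2 hαβ.le)]
  exact norm_integral_e_sub_sum_hFun_le (by omega) hαβ.le hβα hT.le hM
    (sInf_image_abs_pos isCompact_Icc (nonempty_Icc.2 hαβ.le) (hFc 1 (by omega)) hne)
    (by simpa [F] using hFd 0 (by omega)) hFd hFc (fun x hx => sInf_image_abs_le hx) hb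
    hsign1 hsign2

/-- explicit first derivative test.  For `f` that is `n+2` times continuously
differentiable on `[α,β]` with `|f^{(r)}| ≤ C_r T/M^r` (`2 ≤ r ≤ n+2`), `f'`, `f''` of
constant sign, and `f'` nonvanishing,
`∫_α^β e(f) dx = [e(f) Σ_{i=1}^{n} H_i]_α^β + O(Σ_{j=1}^{n} T^j/(min|f'|^{n+j+1} M^{n+j}))`,
with the implied constant depending only on `n` and the `C_r`. -/
theorem weighted_stationary_phase_stmt1
    (n : ℕ) (hn : 1 ≤ n) (C : ℕ → ℝ) (hCpos : ∀ r, 0 < C r) :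
    ∃ K : ℝ, 0 < K ∧
      ∀ (α β M T : ℝ) (f : ℝ → ℝ) (H : ℕ → ℝ → ℂ),
        α < β → 0 < M → 0 < T → β - α ≤ M →
        ContDiffOn ℝ (n + 2) f (Set.Icc α β) →
        (∀ r, 2 ≤ r → r ≤ n + 2 → ∀ x ∈ Set.Icc α β,
          |iteratedDerivWithin r f (Set.Icc α β) x| ≤ C r * T / M ^ r) →
        ((∀ x ∈ Set.Icc α β, 0 ≤ derivWithin f (Set.Icc α β) x) ∨
          (∀ x ∈ Set.Icc α β, derivWithin f (Set.Icc α β) x ≤ 0)) →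
        ((∀ x ∈ Set.Icc α β, 0 ≤ iteratedDerivWithin 2 f (Set.Icc α β) x) ∨
          (∀ x ∈ Set.Icc α β, iteratedDerivWithin 2 f (Set.Icc α β) x ≤ 0)) →
        (∀ x ∈ Set.Icc α β, derivWithin f (Set.Icc α β) x ≠ 0) →
        (∀ x ∈ Set.Icc α β, H 1 x =
          1 / (2 * Real.pi * Complex.I * derivWithin f (Set.Icc α β) x)) →
        (∀ i, 2 ≤ i → i ≤ n → ∀ x ∈ Set.Icc α β, H i x =
          -(derivWithin (H (i - 1)) (Set.Icc α β) x) /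
            (2 * Real.pi * Complex.I * derivWithin f (Set.Icc α β) x)) →
        ‖(∫ x in α..β, e (f x)) -
            (e (f β) * ∑ i ∈ Finset.Icc 1 n, H i β -
             e (f α) * ∑ i ∈ Finset.Icc 1 n, H i α)‖ ≤
          K * ∑ j ∈ Finset.Icc 1 n,
            T ^ j /
              ((sInf ((fun x => |derivWithin f (Set.Icc α β) x|) '' Set.Icc α β)) ^ (n + j + 1) *
                M ^ (n + j)) :=
  weighted_stationary_phase_stmt1_general n hn C
end

section
/- Under the setup below, if T^{1/(2n+3)} Δ > 1, then r = min(r_1, r_2, Δ M) satisfies r ≥ min( (γ−α)/C_2, (β−γ)/C_2, M·T^{−1/(2n+3)} ). -/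
/-!
With `c = T / (C₂ M²)`, the function `g x = f x - c/2 (x - γ)²` has `g'' ≥ 0` and `g'(γ) = 0`,
so `g` decreases up to `γ` and increases after it: `f x ≥ f γ + c/2 (x - γ)²` on `[α, β]`.
Comparing this at `α` with `f α = f γ + λ₂ r₁²` and using `2 λ₂ ≤ C₂ T / M² = C₂² c` gives
`(γ - α)² ≤ C₂² r₁²`, and likewise `(β - γ)² ≤ C₂² r₂²` at `β`. Finally `T^{1/(2n+3)} Δ > 1`
is exactly `T^{-1/(2n+3)} < Δ`.
-/

open Set

lemma isMinOn_Icc_of_hasDerivAt {g g' : ℝ → ℝ} {a b γ : ℝ} (hγ : γ ∈ Icc a b)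
    (hg : ContinuousOn g (Icc a b)) (hg' : ∀ y ∈ Ioo a b, HasDerivAt g (g' y) y)
    (hleft : ∀ y ∈ Ioo a γ, g' y ≤ 0) (hright : ∀ y ∈ Ioo γ b, 0 ≤ g' y) :
    IsMinOn g (Icc a b) γ := by
  refine isMinOn_Icc_of_anti_mono
    (antitoneOn_of_hasDerivWithinAt_nonpos (f' := g') (convex_Icc a γ)
      (hg.mono (Icc_subset_Icc_right hγ.2)) ?_ ?_)
    (monotoneOn_of_hasDerivWithinAt_nonneg (f' := g') (convex_Icc γ b)
      (hg.mono (Icc_subset_Icc_left hγ.1)) ?_ ?_) <;> simp only [interior_Icc]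
  · exact fun y hy ↦ (hg' y ⟨hy.1, hy.2.trans_le hγ.2⟩).hasDerivWithinAt
  · exact hleft
  · exact fun y hy ↦ (hg' y ⟨hγ.1.trans_lt hy.1, hy.2⟩).hasDerivWithinAt
  · exact hright

section QuadraticGrowth

variable {f : ℝ → ℝ} {a b c γ : ℝ}

lemma ContDiffOn.hasDerivAt_derivWithin_Icc (hf : ContDiffOn ℝ 1 f (Icc a b)) {x : ℝ}
    (hx : x ∈ Ioo a b) : HasDerivAt f (derivWithin f (Icc a b) x) x :=
  (hf.differentiableOn one_ne_zero x (Ioo_subset_Icc_self hx)).hasDerivWithinAt.hasDerivAt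
    (Icc_mem_nhds hx.1 hx.2)

lemma mul_sub_le_derivWithin_sub_of_le_iteratedDerivWithin_two
    (hf : ContDiffOn ℝ 2 f (Icc a b))
    (hc : ∀ x ∈ Icc a b, c ≤ iteratedDerivWithin 2 f (Icc a b) x) {x y : ℝ} (hx : x ∈ Icc a b)
    (hy : y ∈ Icc a b) (hxy : x ≤ y) :
    c * (y - x) ≤ derivWithin f (Icc a b) y - derivWithin f (Icc a b) x := by
  rcases hxy.eq_or_lt with rfl | hxy
  · simp
  have hf' : ContDiffOn ℝ 1 (derivWithin f (Icc a b)) (Icc a b) :=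
    hf.derivWithin (uniqueDiffOn_Icc (hx.1.trans_lt (hxy.trans_le hy.2))) (by norm_num)
  refine (convex_Icc a b).mul_sub_le_image_sub_of_le_deriv hf'.continuousOn ?_ ?_ x hx y hy hxy.le
  · rw [interior_Icc]
    exact fun z hz ↦ (hf'.hasDerivAt_derivWithin_Icc hz).differentiableAt.differentiableWithinAt
  · rw [interior_Icc]
    intro z hz
    rw [(hf'.hasDerivAt_derivWithin_Icc hz).deriv]
    simpa [iteratedDerivWithin_eq_iterate] using hc z (Ioo_subset_Icc_self hz)

theorem add_mul_sq_le_of_le_iteratedDerivWithin_two (hf : ContDiffOn ℝ 2 f (Icc a b))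
    (hc : ∀ x ∈ Icc a b, c ≤ iteratedDerivWithin 2 f (Icc a b) x) (hγ : γ ∈ Icc a b)
    (hf'γ : derivWithin f (Icc a b) γ = 0) {x : ℝ} (hx : x ∈ Icc a b) :
    f γ + c / 2 * (x - γ) ^ 2 ≤ f x := by
  set g : ℝ → ℝ := fun y ↦ f y - c / 2 * (y - γ) ^ 2
  have hg : ∀ y ∈ Ioo a b, HasDerivAt g (derivWithin f (Icc a b) y - c * (y - γ)) y := by
    intro y hy
    have hq : HasDerivAt (fun y ↦ c / 2 * (y - γ) ^ 2) (c * (y - γ)) y :=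
      ((((hasDerivAt_id' y).sub_const γ).fun_pow 2).const_mul (c / 2)).congr_deriv
        (by push_cast; ring)
    exact ((hf.of_le (by norm_num)).hasDerivAt_derivWithin_Icc hy).sub hq
  have hgc : ContinuousOn g (Icc a b) := hf.continuousOn.sub (by fun_prop)
  have hmin : IsMinOn g (Icc a b) γ := by
    refine isMinOn_Icc_of_hasDerivAt hγ hgc hg (fun y hy ↦ ?_) (fun y hy ↦ ?_)
    · linarith [mul_sub_le_derivWithin_sub_of_le_iteratedDerivWithin_two hf hc
        ⟨hy.1.le, hy.2.le.trans hγ.2⟩ hγ hy.2.le]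
    · linarith [mul_sub_le_derivWithin_sub_of_le_iteratedDerivWithin_two hf hc hγ
        ⟨hγ.1.trans hy.1.le, hy.2.le⟩ hy.1.le]
  have hgx : g γ ≤ g x := hmin hx
  simp only [g, sub_self] at hgx
  linarith

end QuadraticGrowth

lemma abs_le_mul_of_mul_sq_le {κ lam C d r : ℝ} (hκ : 0 < κ) (hC : 0 ≤ C) (hr : 0 ≤ r)
    (hlam : lam ≤ C ^ 2 * κ) (h : κ * d ^ 2 ≤ lam * r ^ 2) : |d| ≤ C * r := by
  refine abs_le_of_sq_le_sq (le_of_mul_le_mul_left ?_ hκ) (by positivity)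
  calc κ * d ^ 2 ≤ lam * r ^ 2 := h
    _ ≤ C ^ 2 * κ * r ^ 2 := by gcongr
    _ = κ * (C * r) ^ 2 := by ring

lemma rpow_neg_le_of_one_le_rpow_mul {T p Δ : ℝ} (hT : 0 < T) (h : 1 ≤ T ^ p * Δ) :
    T ^ (-p) ≤ Δ := by
  rwa [Real.rpow_neg hT.le, inv_le_iff_one_le_mul₀' (Real.rpow_pos_of_pos hT p)]

/-- Under the phase setup, if `T^{1/(2n+3)} Δ > 1`, then
`r = min(r₁, r₂, ΔM)` satisfies `r ≥ min((γ−α)/C₂, (β−γ)/C₂, M T^{−1/(2n+3)})`. -/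
theorem weighted_stationary_phase_stmt4
    (n : ℕ) (C : ℕ → ℝ) (hC : ∀ k, 0 < C k)
    (α β γ M T r1 r2 : ℝ) (f : ℝ → ℝ)
    (hαγ : α < γ) (hγβ : γ < β) (hM : 0 < M) (hT : 0 < T)
    (hf : ContDiffOn ℝ (2 * n + 3) f (Set.Icc α β))
    (hf'γ : derivWithin f (Set.Icc α β) γ = 0)
    (hDer : ∀ r, 2 ≤ r → r ≤ 2 * n + 3 → ∀ x ∈ Set.Icc α β,
      |iteratedDerivWithin r f (Set.Icc α β) x| ≤ C r * T / M ^ r)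
    (hf'' : ∀ x ∈ Set.Icc α β, T / (C 2 * M ^ 2) ≤ iteratedDerivWithin 2 f (Set.Icc α β) x)
    (hr1 : 0 < r1) (hr2 : 0 < r2)
    (hfα : f α = f γ + (iteratedDerivWithin 2 f (Set.Icc α β) γ / 2) * r1 ^ 2)
    (hfβ : f β = f γ + (iteratedDerivWithin 2 f (Set.Icc α β) γ / 2) * r2 ^ 2)
    (hbig : T ^ ((1 : ℝ) / (2 * (n : ℝ) + 3)) *
        (min (Real.log 2 / C 2)
          (1 / ((C 2) ^ 2 *
            (Finset.Icc 2 (2 * n + 3)).sup' (Finset.nonempty_Icc.mpr (by omega)) C))) > 1) :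
    min ((γ - α) / C 2) (min ((β - γ) / C 2) (M * T ^ (-(1 : ℝ) / (2 * (n : ℝ) + 3)))) ≤
      min r1 (min r2
        ((min (Real.log 2 / C 2)
          (1 / ((C 2) ^ 2 *
            (Finset.Icc 2 (2 * n + 3)).sup' (Finset.nonempty_Icc.mpr (by omega)) C))) * M)) := by
  have hC2 : 0 < C 2 := hC 2
  have hγ : γ ∈ Icc α β := ⟨hαγ.le, hγβ.le⟩
  set κ := T / (C 2 * M ^ 2)
  set lam := iteratedDerivWithin 2 f (Icc α β) γ
  have hgrowth {x : ℝ} (hx : x ∈ Icc α β) : f γ + κ / 2 * (x - γ) ^ 2 ≤ f x :=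
    add_mul_sq_le_of_le_iteratedDerivWithin_two (hf.of_le (by norm_cast; omega)) hf'' hγ hf'γ hx
  have hlam : lam ≤ C 2 ^ 2 * κ :=
    calc lam ≤ C 2 * T / M ^ 2 := (abs_le.mp (hDer 2 le_rfl (by omega) γ hγ)).2
      _ = C 2 ^ 2 * κ := by simp only [κ]; field_simp
  have hleft : |α - γ| ≤ C 2 * r1 := abs_le_mul_of_mul_sq_le (by positivity) hC2.le hr1.le hlam
    (by linarith [hgrowth ⟨le_rfl, (hαγ.trans hγβ).le⟩])
  have hright : |β - γ| ≤ C 2 * r2 := abs_le_mul_of_mul_sq_le (by positivity) hC2.le hr2.le hlam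
    (by linarith [hgrowth ⟨(hαγ.trans hγβ).le, le_rfl⟩])
  rw [abs_sub_comm, abs_of_pos (sub_pos.2 hαγ)] at hleft
  rw [abs_of_pos (sub_pos.2 hγβ)] at hright
  refine min_le_min ((div_le_iff₀' hC2).2 hleft) (min_le_min ((div_le_iff₀' hC2).2 hright) ?_)
  rw [mul_comm, neg_div]
  exact mul_le_mul_of_nonneg_right (rpow_neg_le_of_one_le_rpow_mul hT hbig.le) hM.le
end

section
/- Let λ be a nonzero real number, r > 0, and j ≥ 1 an integer. For 1 ≤ t ≤ j define φ_t(y) = (−1)^{t−1} · [ (2j−1)(2j−3)···(2j−(2t−3)) ] / (4π λ i)^t · y^{2j−(2t−1)}, where the product in brackets is empty (equal to 1) when t = 1. Then ∫_{−r}^{r} e(λ y²) y^{2j} dy = [ e(λ y²) Σ_{t=1}^{j} φ_t(y) ]_{−r}^{r} + ( (−1)^j (2j−1)!! / (4π i λ)^j ) ∫_{−r}^{r} e(λ y²) dy. -/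
/-!
Differentiating `e(λy²) yⁿ⁺¹` gives `4πiλ e(λy²) yⁿ⁺² + (n+1) e(λy²) yⁿ`, so integration by parts
expresses `∫ e(λy²) yⁿ⁺²` through a boundary term and `∫ e(λy²) yⁿ`.
Running this reduction `j` times takes `y^{2j}` down to `y⁰`; the factors `-(2k+1)/(4πiλ)` collected
along the way give the coefficients of the `φ_t` and, in the last step, `(-1)ʲ (2j-1)!!/(4πiλ)ʲ`.
-/

open Complex Real Finset intervalIntegral MeasureTheory

lemma continuous_e_mul_sq_mul_pow (lam : ℝ) (n : ℕ) :
    Continuous fun y : ℝ => e (lam * y ^ 2) * (y : ℂ) ^ n := by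
  unfold e
  fun_prop

lemma hasDerivAt_e_mul_sq (lam y : ℝ) :
    HasDerivAt (fun y : ℝ => e (lam * y ^ 2)) (4 * π * I * lam * y * e (lam * y ^ 2)) y := by
  have hphase : HasDerivAt (fun y : ℝ => 2 * π * I * ((lam * y ^ 2 : ℝ) : ℂ))
      (2 * π * I * ((lam * (2 * y) : ℝ) : ℂ)) y := by
    simpa using (((hasDerivAt_pow 2 y).const_mul lam).ofReal_comp).const_mul (2 * π * I)
  unfold e
  convert hphase.cexp using 1
  push_cast
  ring

lemma hasDerivAt_e_mul_sq_mul_pow (lam y : ℝ) (n : ℕ) :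
    HasDerivAt (fun y : ℝ => e (lam * y ^ 2) * (y : ℂ) ^ (n + 1))
      (4 * π * I * lam * (e (lam * y ^ 2) * (y : ℂ) ^ (n + 2))
        + (n + 1) * (e (lam * y ^ 2) * (y : ℂ) ^ n)) y := by
  refine ((hasDerivAt_e_mul_sq lam y).mul
    (hasDerivAt_pow (n + 1) (y : ℂ)).comp_ofReal).congr_deriv ?_
  push_cast
  ring

theorem integral_e_mul_sq_mul_pow_add_two {lam : ℝ} (hlam : lam ≠ 0) (a b : ℝ) (n : ℕ) :
    ∫ y in a..b, e (lam * y ^ 2) * (y : ℂ) ^ (n + 2) =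
      (e (lam * b ^ 2) * (b : ℂ) ^ (n + 1) - e (lam * a ^ 2) * (a : ℂ) ^ (n + 1)
        - (n + 1) * ∫ y in a..b, e (lam * y ^ 2) * (y : ℂ) ^ n) / (4 * π * I * lam) := by
  have hc : (4 * π * I * lam : ℂ) ≠ 0 := by simp [hlam]
  have hint : ∀ k, IntervalIntegrable (fun y : ℝ => e (lam * y ^ 2) * (y : ℂ) ^ k) volume a b :=
    fun k ↦ (continuous_e_mul_sq_mul_pow lam k).intervalIntegrable a b
  have hftc := integral_eq_sub_of_hasDerivAt (fun y _ ↦ hasDerivAt_e_mul_sq_mul_pow lam y n)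
    (((hint (n + 2)).const_mul _).add ((hint n).const_mul _))
  rw [integral_add ((hint (n + 2)).const_mul _) ((hint n).const_mul _),
    intervalIntegral.integral_const_mul, intervalIntegral.integral_const_mul] at hftc
  rw [eq_div_iff hc]
  linear_combination hftc

/-- For `c = 4πiλ`, the paper's `φ_{t+1}(y)` is `ibpCoeff c j t * y^{2j-2t-1}`. -/
noncomputable def ibpCoeff (c : ℂ) (j t : ℕ) : ℂ :=
  (-1) ^ t * (∏ m ∈ range t, (2 * (j : ℂ) - 2 * m - 1)) / c ^ (t + 1)

lemma ibpCoeff_zero (c : ℂ) (j : ℕ) : ibpCoeff c j 0 = 1 / c := by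
  simp [ibpCoeff]

lemma ibpCoeff_succ_succ (c : ℂ) (j t : ℕ) :
    ibpCoeff c (j + 1) (t + 1) = -((2 * j + 1) / c) * ibpCoeff c j t := by
  have hprod : ∏ m ∈ range t, (2 * ((j + 1 : ℕ) : ℂ) - 2 * ((m + 1 : ℕ) : ℂ) - 1) =
      ∏ m ∈ range t, (2 * (j : ℂ) - 2 * m - 1) :=
    prod_congr rfl fun m _ ↦ by push_cast; ring
  simp only [ibpCoeff, prod_range_succ', hprod]
  push_cast
  ring

theorem integral_e_mul_sq_mul_pow_two_mul {lam : ℝ} (hlam : lam ≠ 0) (a b : ℝ) (j : ℕ) :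
    ∫ y in a..b, e (lam * y ^ 2) * (y : ℂ) ^ (2 * j) =
      ∑ t ∈ range j, ibpCoeff (4 * π * I * lam) j t *
          (e (lam * b ^ 2) * (b : ℂ) ^ (2 * (j - t) - 1)
            - e (lam * a ^ 2) * (a : ℂ) ^ (2 * (j - t) - 1))
        + (-1) ^ j * Nat.doubleFactorial (2 * j - 1) / (4 * π * I * lam) ^ j *
          ∫ y in a..b, e (lam * y ^ 2) := by
  have hc : (4 * π * I * lam : ℂ) ≠ 0 := by simp [hlam]
  induction j with
  | zero => simp
  | succ j ih =>
    rw [show 2 * (j + 1) = 2 * j + 2 by ring, integral_e_mul_sq_mul_pow_add_two hlam, ih,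
      sum_range_succ']
    set c : ℂ := 4 * π * I * lam
    simp only [ibpCoeff_succ_succ, ibpCoeff_zero, Nat.add_sub_add_right, mul_assoc, ← mul_sum]
    rw [show 2 * j + 2 - 1 = 2 * j + 1 by omega, Nat.doubleFactorial_add_one,
      show 2 * (j + 1 - 0) - 1 = 2 * j + 1 by omega]
    field_simp
    push_cast
    ring

lemma Icc_one_eq_map_range (n : ℕ) : Icc 1 n = (range n).map (addRightEmbedding 1) := by
  rw [range_eq_Ico, map_add_right_Ico, Ico_add_one_right_eq_Icc, zero_add]

lemma e_mul_sum_Icc_eq_sum_ibpCoeff (lam y : ℝ) (j : ℕ) :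
    e (lam * y ^ 2) * ∑ t ∈ Icc 1 j,
        (-1 : ℂ) ^ (t - 1) * (∏ m ∈ Icc 1 (t - 1), (2 * (j : ℂ) - (2 * (m : ℂ) - 1))) /
          (4 * π * lam * I) ^ t * (y : ℂ) ^ (2 * (j : ℤ) - (2 * (t : ℤ) - 1)) =
      ∑ t ∈ range j,
        ibpCoeff (4 * π * I * lam) j t * (e (lam * y ^ 2) * (y : ℂ) ^ (2 * (j - t) - 1)) := by
  rw [Icc_one_eq_map_range, sum_map, mul_sum]
  refine sum_congr rfl fun t ht ↦ ?_
  have hexp : 2 * (j : ℤ) - (2 * ((t + 1 : ℕ) : ℤ) - 1) = ((2 * (j - t) - 1 : ℕ) : ℤ) := by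
    have htj : t < j := mem_range.mp ht
    omega
  simp only [addRightEmbedding_apply, Nat.add_sub_cancel, Icc_one_eq_map_range, prod_map, hexp,
    zpow_natCast, ibpCoeff]
  push_cast
  ring_nf

theorem weighted_stationary_phase_stmt14_general
    (lam : ℝ) (hlam : lam ≠ 0) (r : ℝ) (j : ℕ) :
    let φ : ℕ → ℝ → ℂ := fun t y =>
      (-1 : ℂ) ^ (t - 1) *
        (∏ m ∈ Finset.Icc 1 (t - 1), (2 * (j : ℂ) - (2 * (m : ℂ) - 1))) /
        (4 * Real.pi * lam * Complex.I) ^ t *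
        (y : ℂ) ^ (2 * (j : ℤ) - (2 * (t : ℤ) - 1))
    let S : ℝ → ℂ := fun y => e (lam * y ^ 2) * ∑ t ∈ Finset.Icc 1 j, φ t y
    (∫ y in (-r)..r, e (lam * y ^ 2) * (y : ℂ) ^ (2 * j)) =
      (S r - S (-r)) +
        ((-1 : ℂ) ^ j * (Nat.doubleFactorial (2 * j - 1) : ℂ) /
            (4 * Real.pi * Complex.I * lam) ^ j) *
          ∫ y in (-r)..r, e (lam * y ^ 2) := by
  intro φ S
  simp only [S, φ, e_mul_sum_Icc_eq_sum_ibpCoeff, ← sum_sub_distrib, ← mul_sub]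
  exact integral_e_mul_sq_mul_pow_two_mul hlam (-r) r j

/-- For `λ ≠ 0`, `r > 0`, `j ≥ 1`, with
`φ_t(y) = (−1)^{t−1} (2j−1)(2j−3)⋯(2j−(2t−3)) / (4πλi)^t · y^{2j−(2t−1)}` for `1 ≤ t ≤ j`,
one has `∫_{−r}^{r} e(λy²) y^{2j} dy = [e(λy²) Σ_{t=1}^{j} φ_t(y)]_{−r}^{r}
+ ((−1)^j (2j−1)!!/(4πiλ)^j) ∫_{−r}^{r} e(λy²) dy`. -/
theorem weighted_stationary_phase_stmt14
    (lam : ℝ) (hlam : lam ≠ 0) (r : ℝ) (hr : 0 < r) (j : ℕ) (hj : 1 ≤ j) :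
    let φ : ℕ → ℝ → ℂ := fun t y =>
      (-1 : ℂ) ^ (t - 1) *
        (∏ m ∈ Finset.Icc 1 (t - 1), (2 * (j : ℂ) - (2 * (m : ℂ) - 1))) /
        (4 * Real.pi * lam * Complex.I) ^ t *
        (y : ℂ) ^ (2 * (j : ℤ) - (2 * (t : ℤ) - 1))
    let S : ℝ → ℂ := fun y => e (lam * y ^ 2) * ∑ t ∈ Finset.Icc 1 j, φ t y
    (∫ y in (-r)..r, e (lam * y ^ 2) * (y : ℂ) ^ (2 * j)) =
      (S r - S (-r)) +
        ((-1 : ℂ) ^ j * (Nat.doubleFactorial (2 * j - 1) : ℂ) /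
            (4 * Real.pi * Complex.I * lam) ^ j) *
          ∫ y in (-r)..r, e (lam * y ^ 2) :=
  weighted_stationary_phase_stmt14_general lam hlam r j
end

section
/- Let n ≥ 1 be an integer, let I and J be real intervals, and let x : J → I be an n+1 times continuously differentiable map with x'(y) ≠ 0 for all y ∈ J. Let f : I → ℝ be n+1 times continuously differentiable with f'(x(y)) ≠ 0 for all y ∈ J, and let g : I → ℝ be n times continuously differentiable. Set F(y) = f(x(y)) and G(y) = g(x(y))·x'(y). Define H_1 = g/(2πi f'), H_k = −H'_{k−1}/(2πi f') on I (for k ≥ 2, wherever defined), and θ_1 = G/(2πi F'), θ_k = −θ'_{k−1}/(2πi F') on J. Then θ_k(y) = H_k(x(y)) for all y ∈ J and all 1 ≤ k ≤ n+1. -/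
/-!
The weights are obtained by iterating `φ ↦ -φ' / (2πi f')` on `I` and `ψ ↦ -ψ' / (2πi F')` on `J`.
By the chain rule `(φ ∘ x)' / F' = x' · (φ' ∘ x) / (x' · (f' ∘ x))`, and since `x' ≠ 0` the factor
`x'` cancels: one step of the second iteration applied to `φ ∘ x` is the first one applied to `φ`,
composed with `x`. Induction on `k` then only needs each `H_k` to be differentiable at the points
`x(y)`; this holds because `H_k` is `C^(n+1-k)` on the relatively open part of `I` where `f' ≠ 0`.
-/

open Set

section Regularity

variable {𝕜 𝕜' : Type*} [NontriviallyNormedField 𝕜] [NormedField 𝕜'] [NormedAlgebra 𝕜 𝕜']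
  {s : Set 𝕜} {m : WithTop ℕ∞}

theorem ContDiffOn.div_of_ne_zero {u a : 𝕜 → 𝕜'} (hu : ContDiffOn 𝕜 m u s)
    (ha : ContDiffOn 𝕜 m a s) (ha0 : ∀ t ∈ s, a t ≠ 0) :
    ContDiffOn 𝕜 m (fun t => u t / a t) s :=
  (hu.mul (ha.inv ha0)).congr fun _ _ => div_eq_mul_inv _ _

theorem contDiffOn_of_eq_neg_derivWithin_div {n : ℕ} {a : 𝕜 → 𝕜'} {w : ℕ → 𝕜 → 𝕜'}
    (hs : UniqueDiffOn 𝕜 s) (ha : ContDiffOn 𝕜 n a s) (ha0 : ∀ t ∈ s, a t ≠ 0)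
    (hw0 : ContDiffOn 𝕜 n (w 0) s)
    (hw : ∀ k < n, ∀ t ∈ s, w (k + 1) t = -derivWithin (w k) s t / a t) :
    ∀ k ≤ n, ContDiffOn 𝕜 (n - k : ℕ) (w k) s := by
  intro k
  induction k with
  | zero => simpa using hw0
  | succ k ih =>
    intro hk
    have hsucc : n - k = (n - (k + 1)) + 1 := by omega
    have hderiv : ContDiffOn 𝕜 (n - (k + 1) : ℕ) (derivWithin (w k) s) s :=
      (ih (by omega)).derivWithin hs (by rw [hsucc]; push_cast; rfl)
    exact (hderiv.neg.div_of_ne_zero (ha.of_le (by exact_mod_cast Nat.sub_le _ _)) ha0).congr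
      (hw k hk)

theorem differentiableWithinAt_of_eq_neg_derivWithin_div {n : ℕ} {I : Set ℝ} {f g : ℝ → ℝ}
    {H : ℕ → ℝ → ℂ} {c : ℂ} (hc : c ≠ 0) (hI : UniqueDiffOn ℝ I) (hf : ContDiffOn ℝ (n + 1) f I)
    (hg : ContDiffOn ℝ n g I) (hH0 : ∀ t ∈ I, H 0 t = g t / (c * derivWithin f I t))
    (hH : ∀ k < n, ∀ t ∈ I, H (k + 1) t = -derivWithin (H k) I t / (c * derivWithin f I t))
    {t : ℝ} (ht : t ∈ I) (hft : derivWithin f I t ≠ 0) :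
    ∀ k < n, DifferentiableWithinAt ℝ (H k) I t := by
  have hf'C : ContDiffOn ℝ n (derivWithin f I) I := hf.derivWithin hI le_rfl
  obtain ⟨U, hUo, hU⟩ := continuousOn_iff'.1 hf'C.continuousOn {0}ᶜ isOpen_compl_singleton
  have htU : t ∈ U := (hU.subset ⟨hft, ht⟩).1
  have ha : ContDiffOn ℝ n (fun t => c * derivWithin f I t) (I ∩ U) :=
    contDiffOn_const.mul (Complex.ofRealCLM.contDiff.comp_contDiffOn (hf'C.mono inter_subset_left))
  have ha0 : ∀ t ∈ I ∩ U, c * derivWithin f I t ≠ 0 := fun t ht =>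
    mul_ne_zero hc (by exact_mod_cast (hU.symm.subset ⟨ht.2, ht.1⟩).1)
  have hreg := contDiffOn_of_eq_neg_derivWithin_div (hI.inter hUo) ha ha0
    (((Complex.ofRealCLM.contDiff.comp_contDiffOn (hg.mono inter_subset_left)).div_of_ne_zero
      ha ha0).congr fun t ht => hH0 t ht.1)
    fun k hk t ht => by rw [derivWithin_inter (hUo.mem_nhds ht.2)]; exact hH k hk t ht.1
  intro k hk
  exact (differentiableWithinAt_inter (hUo.mem_nhds htU)).1
    ((hreg k hk.le).differentiableOn (by simp; omega) _ ⟨ht, htU⟩)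

end Regularity

section ChangeOfVariables

variable {I J : Set ℝ} {x f : ℝ → ℝ}

theorem mul_derivWithin_div_derivWithin_comp {y : ℝ} (u c : ℂ)
    (hf : DifferentiableWithinAt ℝ f I (x y)) (hx : DifferentiableWithinAt ℝ x J y)
    (hmap : MapsTo x J I) (hx' : derivWithin x J y ≠ 0) :
    u * derivWithin x J y / (c * derivWithin (fun z => f (x z)) J y) =
      u / (c * derivWithin f I (x y)) := by
  rw [show derivWithin (fun z => f (x z)) J y = derivWithin f I (x y) * derivWithin x J y from
      derivWithin_comp y hf hx hmap,
    Complex.ofReal_mul, ← mul_assoc, mul_div_mul_right _ _ (Complex.ofReal_ne_zero.2 hx')]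

theorem derivWithin_comp_div_derivWithin_comp {φ : ℝ → ℂ} {y : ℝ} (c : ℂ)
    (hφ : DifferentiableWithinAt ℝ φ I (x y)) (hf : DifferentiableWithinAt ℝ f I (x y))
    (hx : DifferentiableWithinAt ℝ x J y) (hmap : MapsTo x J I) (hx' : derivWithin x J y ≠ 0) :
    derivWithin (fun z => φ (x z)) J y / (c * derivWithin (fun z => f (x z)) J y) =
      derivWithin φ I (x y) / (c * derivWithin f I (x y)) := by
  have hφx : derivWithin (fun z => φ (x z)) J y = derivWithin φ I (x y) * derivWithin x J y := by
    simpa [Function.comp_def, Complex.real_smul, mul_comm] using derivWithin.scomp y hφ hx hmap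
  rw [hφx, mul_derivWithin_div_derivWithin_comp _ c hf hx hmap hx']

theorem eqOn_comp_of_eq_neg_derivWithin_div {n : ℕ} {H θ : ℕ → ℝ → ℂ} (c : ℂ)
    (hmap : MapsTo x J I) (hx : DifferentiableOn ℝ x J) (hx' : ∀ y ∈ J, derivWithin x J y ≠ 0)
    (hf : ∀ y ∈ J, DifferentiableWithinAt ℝ f I (x y))
    (hH : ∀ k < n, ∀ y ∈ J, DifferentiableWithinAt ℝ (H k) I (x y))
    (hHrec : ∀ k < n, ∀ y ∈ J,
      H (k + 1) (x y) = -derivWithin (H k) I (x y) / (c * derivWithin f I (x y)))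
    (hθrec : ∀ k < n, ∀ y ∈ J,
      θ (k + 1) y = -derivWithin (θ k) J y / (c * derivWithin (fun z => f (x z)) J y))
    (h0 : EqOn (θ 0) (H 0 ∘ x) J) :
    ∀ k ≤ n, EqOn (θ k) (H k ∘ x) J := by
  intro k
  induction k with
  | zero => exact fun _ => h0
  | succ k ih =>
    intro hk y hy
    have hθk : derivWithin (θ k) J y = derivWithin (fun z => H k (x z)) J y :=
      derivWithin_congr (ih (by omega)) (ih (by omega) hy)
    rw [Function.comp_apply, hθrec k hk y hy, hHrec k hk y hy, neg_div, neg_div, hθk,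
      derivWithin_comp_div_derivWithin_comp c (hH k hk y hy) (hf y hy) (hx y hy) hmap (hx' y hy)]

end ChangeOfVariables

theorem weighted_stationary_phase_stmt18_general
    (n : ℕ) (I J : Set ℝ)
    (hUI : UniqueDiffOn ℝ I)
    (x f g : ℝ → ℝ) (H θ : ℕ → ℝ → ℂ)
    (hmap : Set.MapsTo x J I)
    (hx : ContDiffOn ℝ (n + 1) x J)
    (hf : ContDiffOn ℝ (n + 1) f I)
    (hg : ContDiffOn ℝ n g I)
    (hx' : ∀ y ∈ J, derivWithin x J y ≠ 0)
    (hf' : ∀ y ∈ J, derivWithin f I (x y) ≠ 0)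
    (hH1 : ∀ t ∈ I, H 1 t = (g t : ℂ) / (2 * Real.pi * Complex.I * derivWithin f I t))
    (hHk : ∀ k, 2 ≤ k → k ≤ n + 1 → ∀ t ∈ I,
      H k t = -(derivWithin (H (k - 1)) I t) / (2 * Real.pi * Complex.I * derivWithin f I t))
    (hθ1 : ∀ y ∈ J, θ 1 y =
      ((g (x y) * derivWithin x J y : ℝ) : ℂ) /
        (2 * Real.pi * Complex.I * derivWithin (fun z => f (x z)) J y))
    (hθk : ∀ k, 2 ≤ k → k ≤ n + 1 → ∀ y ∈ J,
      θ k y = -(derivWithin (θ (k - 1)) J y) /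
        (2 * Real.pi * Complex.I * derivWithin (fun z => f (x z)) J y)) :
    ∀ y ∈ J, ∀ k, 1 ≤ k → k ≤ n + 1 → θ k y = H k (x y) := by
  set c : ℂ := 2 * Real.pi * Complex.I
  have hfd : ∀ y ∈ J, DifferentiableWithinAt ℝ f I (x y) := fun y hy =>
    hf.differentiableOn (by simp) _ (hmap hy)
  have hxd : DifferentiableOn ℝ x J := hx.differentiableOn (by simp)
  have hHd : ∀ k < n, ∀ y ∈ J, DifferentiableWithinAt ℝ (H (k + 1)) I (x y) := fun k hk y hy =>
    differentiableWithinAt_of_eq_neg_derivWithin_div (H := fun k => H (k + 1))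
      (by simp [c, Real.pi_ne_zero]) hUI hf hg hH1
      (fun k hk t ht => hHk (k + 2) (by omega) (by omega) t ht) (hmap hy) (hf' y hy) k hk
  have key := eqOn_comp_of_eq_neg_derivWithin_div (H := fun k => H (k + 1))
    (θ := fun k => θ (k + 1)) c hmap hxd hx' hfd hHd
    (fun k hk y hy => hHk (k + 2) (by omega) (by omega) _ (hmap hy))
    (fun k hk y hy => hθk (k + 2) (by omega) (by omega) y hy)
    fun y hy => by
      rw [Function.comp_apply, hθ1 y hy, hH1 _ (hmap hy), Complex.ofReal_mul,
        mul_derivWithin_div_derivWithin_comp _ c (hfd y hy) (hxd y hy) hmap (hx' y hy)]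
  intro y hy k hk1 hk2
  obtain ⟨k, rfl⟩ := Nat.exists_eq_add_of_le' hk1
  exact key k (by omega) hy

/-- change of variables intertwines the integration-by-parts weights:
with `F = f ∘ x`, `G = (g ∘ x)·x'`, `H₁ = g/(2πif')`, `H_k = −H'_{k−1}/(2πif')`,
`θ₁ = G/(2πiF')`, `θ_k = −θ'_{k−1}/(2πiF')`, one has `θ_k(y) = H_k(x(y))` on `J`
for `1 ≤ k ≤ n+1`. -/
theorem weighted_stationary_phase_stmt18
    (n : ℕ) (hn : 1 ≤ n) (I J : Set ℝ)
    (hIint : I.OrdConnected) (hJint : J.OrdConnected)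
    (hUI : UniqueDiffOn ℝ I) (hUJ : UniqueDiffOn ℝ J)
    (x f g : ℝ → ℝ) (H θ : ℕ → ℝ → ℂ)
    (hmap : Set.MapsTo x J I)
    (hx : ContDiffOn ℝ (n + 1) x J)
    (hf : ContDiffOn ℝ (n + 1) f I)
    (hg : ContDiffOn ℝ n g I)
    (hx' : ∀ y ∈ J, derivWithin x J y ≠ 0)
    (hf' : ∀ y ∈ J, derivWithin f I (x y) ≠ 0)
    (hH1 : ∀ t ∈ I, H 1 t = (g t : ℂ) / (2 * Real.pi * Complex.I * derivWithin f I t))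
    (hHk : ∀ k, 2 ≤ k → k ≤ n + 1 → ∀ t ∈ I,
      H k t = -(derivWithin (H (k - 1)) I t) / (2 * Real.pi * Complex.I * derivWithin f I t))
    (hθ1 : ∀ y ∈ J, θ 1 y =
      ((g (x y) * derivWithin x J y : ℝ) : ℂ) /
        (2 * Real.pi * Complex.I * derivWithin (fun z => f (x z)) J y))
    (hθk : ∀ k, 2 ≤ k → k ≤ n + 1 → ∀ y ∈ J,
      θ k y = -(derivWithin (θ (k - 1)) J y) /
        (2 * Real.pi * Complex.I * derivWithin (fun z => f (x z)) J y)) :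
    ∀ y ∈ J, ∀ k, 1 ≤ k → k ≤ n + 1 → θ k y = H k (x y) :=
  weighted_stationary_phase_stmt18_general n I J hUI x f g H θ hmap hx hf hg hx' hf' hH1 hHk hθ1 hθk
end
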